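/- Let N = 4 and let ρ_DS = Σ_{k=0}^4 p_k |S_k^4⟩⟨S_k^4| be a diagonal symmetric 4-qubit state (p_k ≥ 0, Σ_k p_k = 1). Then for every real α with (3√6 − 8)/2 ≤ α ≤ 5(√21 − 3)/18, the matrix σ = 𝟙_S + α·ρ_DS is fully separable. -/

import Mathlib

open scoped ComplexOrder

noncomputable section

/-- Separability of an `N`-qubit matrix across the bipartition `X : Xᶜ`. -/
def SepAcross {N : ℕ} (X : Finset (Fin N))
    (σ : Matrix (Fin N → Fin 2) (Fin N → Fin 2) ℂ) : Prop :=
  ∃ (K : ℕ)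
    (A : Fin K → Matrix ({i // i ∈ X} → Fin 2) ({i // i ∈ X} → Fin 2) ℂ)
    (B : Fin K → Matrix ({i // i ∈ Xᶜ} → Fin 2) ({i // i ∈ Xᶜ} → Fin 2) ℂ),
    (∀ k, (A k).PosSemidef) ∧ (∀ k, (B k).PosSemidef) ∧
    ∀ x y, σ x y =
      ∑ k, A k (fun i => x i.1) (fun i => y i.1) * B k (fun i => x i.1) (fun i => y i.1)

/-- Partial transpose with respect to the qubits in `X`. -/
def pt {N : ℕ} (X : Finset (Fin N))
    (σ : Matrix (Fin N → Fin 2) (Fin N → Fin 2) ℂ) :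
    Matrix (Fin N → Fin 2) (Fin N → Fin 2) ℂ :=
  fun x y => σ (fun i => if i ∈ X then y i else x i) (fun i => if i ∈ X then x i else y i)

/-- The Dicke state `|S_k^N⟩`. -/
def dicke (N k : ℕ) : (Fin N → Fin 2) → ℂ :=
  fun x => if (Finset.univ.filter (fun i => x i = 1)).card = k
    then ((Real.sqrt (N.choose k))⁻¹ : ℝ) else 0

/-- The projector onto the symmetric subspace of `N` qubits. -/
def symProj (N : ℕ) : Matrix (Fin N → Fin 2) (Fin N → Fin 2) ℂ :=
  fun x y => ∑ k ∈ Finset.range (N + 1), dicke N k x * star (dicke N k y)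

/-- Full separability of an `N`-qubit matrix. -/
def FullySep {N : ℕ} (σ : Matrix (Fin N → Fin 2) (Fin N → Fin 2) ℂ) : Prop :=
  ∃ (K : ℕ) (A : Fin K → Fin N → Matrix (Fin 2) (Fin 2) ℂ),
    (∀ k i, (A k i).PosSemidef) ∧
    ∀ x y, σ x y = ∑ k, ∏ i, A k i (x i) (y i)

/-- The second Pauli matrix. -/
def pauliY : Matrix (Fin 2) (Fin 2) ℂ := !![0, -Complex.I; Complex.I, 0]

/-- The `N`-qubit operator acting as `σy` on each qubit in `X` and trivially elsewhere. -/
def pauliYat {N : ℕ} (X : Finset (Fin N)) :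
    Matrix (Fin N → Fin 2) (Fin N → Fin 2) ℂ :=
  fun x y => ∏ i, if i ∈ X then pauliY (x i) (y i) else (if x i = y i then 1 else 0)

/-- `(σy@X) · ρ^{T_X} · (σy@X)`. -/
def tildeAt {N : ℕ} (X : Finset (Fin N))
    (ρ : Matrix (Fin N → Fin 2) (Fin N → Fin 2) ℂ) :
    Matrix (Fin N → Fin 2) (Fin N → Fin 2) ℂ :=
  pauliYat X * pt X ρ * pauliYat X

/-- The Hankel matrix `M_l(q)` with entries `q_{i+j+l} / (N choose (i+j+l))`. -/
def hankel (N l : ℕ) (q : ℕ → ℝ) :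
    Matrix (Fin ((N - l) / 2 + 1)) (Fin ((N - l) / 2 + 1)) ℝ :=
  fun i j => q ((i : ℕ) + j + l) / (N.choose ((i : ℕ) + j + l))

/-- The diagonal symmetric state `Σ_k p_k |S_k^N⟩⟨S_k^N|`. -/
def rhoDS (N : ℕ) (p : ℕ → ℝ) : Matrix (Fin N → Fin 2) (Fin N → Fin 2) ℂ :=
  fun x y => ∑ k ∈ Finset.range (N + 1), (p k : ℂ) * dicke N k x * star (dicke N k y)

/-!
With `q n = 1 + α p n`, the matrix `𝟙_S + α ρ_DS` is `Σ_n q n |S_n⟩⟨S_n|`. Whenever the binary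
form `Σ_n q n X^(4-n) Y^n` equals `Σ_k w_k (a_k X + b_k Y)^4` with `w, a, b ≥ 0`, averaging the
product states `(√a_k |0⟩ + √b_k e^{iθ} |1⟩)^{⊗4}` over the fifth roots of unity `e^{iθ}` kills
the blocks between different Hamming weights and reproduces `Σ_n q n |S_n⟩⟨S_n|`, a fully
separable matrix. Such forms make a convex cone, and `q` is the convex combination, with weights
`p_j`, of the forms of `𝟙_S + α |S_j⟩⟨S_j|`. For fixed `j` the admissible `α` form an interval,
so it suffices to decompose these forms at the two ends `α = (3√6 - 8)/2` and
`α = 5(√21 - 3)/18`; the cases `j = 3, 4` follow from `j = 1, 0` by the symmetry `X ↔ Y`.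
-/

def weight {N : ℕ} (x : Fin N → Fin 2) : ℕ := (Finset.univ.filter (fun i => x i = 1)).card

lemma weight_le {N : ℕ} (x : Fin N → Fin 2) : weight x ≤ N :=
  (Finset.card_filter_le _ _).trans_eq (Finset.card_fin N)

lemma prod_comp_eq_pow_weight {M : Type*} [CommMonoid M] {N : ℕ} (v : Fin 2 → M)
    (x : Fin N → Fin 2) : ∏ i, v (x i) = v 0 ^ (N - weight x) * v 1 ^ weight x := by
  have hv : ∀ i, v (x i) = if x i = 1 then v 1 else v 0 := fun i => by
    split_ifs with h
    · rw [h]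
    · rw [show x i = 0 by omega]
  have hcard := Finset.card_filter_add_card_filter_not (s := Finset.univ) (fun i => x i = 1)
  rw [Finset.card_univ, Fintype.card_fin] at hcard
  rw [Finset.prod_congr rfl fun i _ => hv i, Finset.prod_ite, Finset.prod_const,
    Finset.prod_const, mul_comm, weight]
  congr 2
  omega

lemma rhoDS_apply {N : ℕ} (q : ℕ → ℝ) (x y : Fin N → Fin 2) :
    rhoDS N q x y =
      if weight x = weight y then ((q (weight x) / N.choose (weight x) : ℝ) : ℂ) else 0 := by
  have hdicke : ∀ k z, dicke N k z =
      if weight z = k then (((√(N.choose k))⁻¹ : ℝ) : ℂ) else 0 := fun _ _ => rfl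
  simp only [rhoDS, hdicke]
  split_ifs with h
  · rw [Finset.sum_eq_single (weight x) (fun k _ hk => by simp [Ne.symm hk])
      (fun hk => absurd (Finset.mem_range.2 (Nat.lt_succ_of_le (weight_le x))) hk)]
    have hC : (0 : ℝ) ≤ N.choose (weight x) := Nat.cast_nonneg _
    simp only [← h, if_true, Complex.star_def, Complex.conj_ofReal, mul_assoc,
      ← Complex.ofReal_mul, ← mul_inv, Real.mul_self_sqrt hC, div_eq_mul_inv]
  · refine Finset.sum_eq_zero fun k _ => ?_
    by_cases hx : weight x = k
    · have hy : weight y ≠ k := fun hy => h (hx.trans hy.symm)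
      simp [hy]
    · simp [hx]

lemma sum_pow_mul_star_pow {N : ℕ} {ζ : ℂ} (hζ : IsPrimitiveRoot ζ (N + 1)) {n m : ℕ}
    (hn : n ≤ N) (hm : m ≤ N) :
    ∑ j : Fin (N + 1), (ζ ^ n * star ζ ^ m) ^ (j : ℕ) = if n = m then (N + 1 : ℂ) else 0 := by
  have hstar : star ζ = ζ⁻¹ := (Complex.inv_eq_conj (hζ.norm'_eq_one N.succ_ne_zero)).symm
  have hζ0 : ζ ≠ 0 := hζ.ne_zero N.succ_ne_zero
  rw [Fin.sum_univ_eq_sum_range (fun j => (ζ ^ n * star ζ ^ m) ^ j), hstar]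
  split_ifs with h
  · simp [h, hζ0]
  · have hμ : ζ ^ n * ζ⁻¹ ^ m ≠ 1 := by
      rw [Ne, inv_pow, mul_inv_eq_one₀ (pow_ne_zero _ hζ0)]
      exact fun he => h (hζ.pow_inj (by omega) (by omega) he)
    have hμN : (ζ ^ n * ζ⁻¹ ^ m) ^ (N + 1) = 1 := by
      rw [mul_pow, ← pow_mul, ← pow_mul, mul_comm n, mul_comm m, pow_mul, pow_mul,
        inv_pow, hζ.pow_eq_one, one_pow, inv_one, one_pow, one_mul]
    rw [geom_sum_eq hμ, hμN, sub_self, zero_div]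

lemma fullySep_sum_mul_prod_mul_star {N : ℕ} [NeZero N] {ι : Type*} [Fintype ι] (c : ι → ℝ)
    (hc : ∀ r, 0 ≤ c r) (v : ι → Fin N → Fin 2 → ℂ) :
    FullySep (fun x y => ∑ r, (c r : ℂ) * ∏ i, v r i (x i) * star (v r i (y i))) := by
  let u : ι → Fin N → Fin 2 → ℂ := fun r i => (if i = 0 then ((√(c r) : ℝ) : ℂ) else 1) • v r i
  have hu : ∀ r i a b, u r i a * star (u r i b)
      = (if i = 0 then (c r : ℂ) else 1) * (v r i a * star (v r i b)) := fun r i a b => by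
    by_cases hi : i = 0
    · simp only [u, hi, if_true, Pi.smul_apply, smul_eq_mul, star_mul', Complex.star_def,
        Complex.conj_ofReal]
      rw [show (c r : ℂ) = ((√(c r) * √(c r) : ℝ) : ℂ) by rw [Real.mul_self_sqrt (hc r)]]
      push_cast
      ring
    · simp [u, hi]
  let e := Fintype.equivFin ι
  refine ⟨Fintype.card ι, fun k i => Matrix.vecMulVec (u (e.symm k) i) (star (u (e.symm k) i)),
    fun k i => Matrix.posSemidef_vecMulVec_self_star _, fun x y => ?_⟩
  refine Fintype.sum_equiv e _ _ fun r => ?_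
  simp only [Matrix.vecMulVec_apply, Pi.star_apply, hu, Finset.prod_mul_distrib,
    Finset.prod_ite_eq', Finset.mem_univ, if_true, Equiv.symm_apply_apply]

lemma sum_prod_mul_star_phase {N : ℕ} {ζ : ℂ} (hζ : IsPrimitiveRoot ζ (N + 1)) {a b : ℝ}
    (ha : 0 ≤ a) (hb : 0 ≤ b) (x y : Fin N → Fin 2) :
    ∑ j : Fin (N + 1), ∏ i, ![(√a : ℂ), √b * ζ ^ (j : ℕ)] (x i) *
        star (![(√a : ℂ), √b * ζ ^ (j : ℕ)] (y i)) =
      if weight x = weight y then (((N + 1) * (a ^ (N - weight x) * b ^ weight x) : ℝ) : ℂ)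
      else 0 := by
  have hj : ∀ j : ℕ, ∏ i, ![(√a : ℂ), √b * ζ ^ j] (x i) * star (![(√a : ℂ), √b * ζ ^ j] (y i))
      = (√a : ℂ) ^ (N - weight x) * (√a : ℂ) ^ (N - weight y) * (√b : ℂ) ^ weight x
          * (√b : ℂ) ^ weight y * (ζ ^ weight x * star ζ ^ weight y) ^ j := fun j => by
    rw [Finset.prod_mul_distrib, prod_comp_eq_pow_weight,
      prod_comp_eq_pow_weight (fun c => star (![(√a : ℂ), √b * ζ ^ j] c))]
    simp only [Matrix.cons_val_zero, Matrix.cons_val_one, star_mul', star_pow,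
      Complex.star_def, Complex.conj_ofReal]
    ring
  simp only [hj, ← Finset.mul_sum, sum_pow_mul_star_pow hζ (weight_le x) (weight_le y)]
  split_ifs with h
  · rw [← h]
    have hsq : ∀ {c : ℝ} (k : ℕ), 0 ≤ c → (√c : ℂ) ^ k * (√c : ℂ) ^ k = (c : ℂ) ^ k :=
      fun k hc => by rw [← mul_pow, ← Complex.ofReal_mul, Real.mul_self_sqrt hc]
    push_cast
    linear_combination ((N : ℂ) + 1) * ((√b : ℂ) ^ weight x * (√b : ℂ) ^ weight x)
        * hsq (N - weight x) ha + ((N : ℂ) + 1) * (a : ℂ) ^ (N - weight x) * hsq (weight x) hb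
  · rw [mul_zero]

/-- `∑ n, q n X^(N-n) Y^n` is a nonnegative combination of `N`-th powers `(a X + b Y)^N`
with `a, b ≥ 0`. -/
def IsConicPowerSum (N : ℕ) (q : ℕ → ℝ) : Prop :=
  ∃ (K : ℕ) (w a b : Fin K → ℝ), (∀ k, 0 ≤ w k) ∧ (∀ k, 0 ≤ a k) ∧ (∀ k, 0 ≤ b k) ∧
    ∀ n ≤ N, ∑ k, w k * a k ^ (N - n) * b k ^ n = q n / N.choose n

theorem IsConicPowerSum.fullySep_rhoDS {N : ℕ} [NeZero N] {q : ℕ → ℝ}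
    (h : IsConicPowerSum N q) : FullySep (rhoDS N q) := by
  obtain ⟨K, w, a, b, hw, ha, hb, hq⟩ := h
  obtain ⟨ζ, hζ⟩ : ∃ ζ : ℂ, IsPrimitiveRoot ζ (N + 1) :=
    ⟨_, Complex.isPrimitiveRoot_exp (N + 1) N.succ_ne_zero⟩
  have hρ : rhoDS N q = fun x y => ∑ r : Fin K × Fin (N + 1), ((w r.1 / (N + 1) : ℝ) : ℂ) *
      ∏ i, ![(√(a r.1) : ℂ), √(b r.1) * ζ ^ (r.2 : ℕ)] (x i) *
        star (![(√(a r.1) : ℂ), √(b r.1) * ζ ^ (r.2 : ℕ)] (y i)) := by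
    ext x y
    simp only [Fintype.sum_prod_type, ← Finset.mul_sum, sum_prod_mul_star_phase hζ (ha _) (hb _),
      rhoDS_apply]
    split_ifs with hxy
    · rw [← hq _ (weight_le x)]
      push_cast
      field_simp
    · simp
  rw [hρ]
  exact fullySep_sum_mul_prod_mul_star _
    (fun r : Fin K × Fin (N + 1) => div_nonneg (hw r.1) (by positivity)) _

namespace IsConicPowerSum

variable {N : ℕ} {q q' : ℕ → ℝ}

lemma zero : IsConicPowerSum N 0 :=
  ⟨0, Fin.elim0, Fin.elim0, Fin.elim0, Fin.rec0, Fin.rec0, Fin.rec0, fun n _ => by simp⟩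

lemma congr (h : IsConicPowerSum N q) (he : ∀ n ≤ N, q n = q' n) : IsConicPowerSum N q' := by
  obtain ⟨K, w, a, b, hw, ha, hb, hq⟩ := h
  exact ⟨K, w, a, b, hw, ha, hb, fun n hn => by rw [← he n hn, hq n hn]⟩

lemma add (h : IsConicPowerSum N q) (h' : IsConicPowerSum N q') :
    IsConicPowerSum N (q + q') := by
  obtain ⟨K, w, a, b, hw, ha, hb, hq⟩ := h
  obtain ⟨K', w', a', b', hw', ha', hb', hq'⟩ := h'
  have happend : ∀ {u : Fin K → ℝ} {u' : Fin K' → ℝ}, (∀ k, 0 ≤ u k) → (∀ k, 0 ≤ u' k) →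
      ∀ k, 0 ≤ Fin.append u u' k := fun hu hu' k =>
    Fin.addCases (fun k => by simpa using hu k) (fun k => by simpa using hu' k) k
  refine ⟨K + K', Fin.append w w', Fin.append a a', Fin.append b b', happend hw hw',
    happend ha ha', happend hb hb', fun n hn => ?_⟩
  simp only [Fin.sum_univ_add, Fin.append_left, Fin.append_right, hq n hn, hq' n hn,
    Pi.add_apply, add_div]

lemma smul (h : IsConicPowerSum N q) {c : ℝ} (hc : 0 ≤ c) : IsConicPowerSum N (c • q) := by
  obtain ⟨K, w, a, b, hw, ha, hb, hq⟩ := h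
  refine ⟨K, c • w, a, b, fun k => mul_nonneg hc (hw k), ha, hb, fun n hn => ?_⟩
  simp only [Pi.smul_apply, smul_eq_mul, mul_assoc, ← Finset.mul_sum, mul_div_assoc]
  simp only [← mul_assoc, hq n hn]

lemma sum {ι : Type*} (s : Finset ι) {q : ι → ℕ → ℝ} (h : ∀ i ∈ s, IsConicPowerSum N (q i)) :
    IsConicPowerSum N (∑ i ∈ s, q i) := by
  classical
  induction s using Finset.induction_on with
  | empty => exact zero
  | insert i s hi ih =>
    rw [Finset.sum_insert hi]
    exact (h i (s.mem_insert_self i)).add (ih fun j hj => h j (Finset.mem_insert_of_mem hj))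

lemma reverse (h : IsConicPowerSum N q) : IsConicPowerSum N (fun n => q (N - n)) := by
  obtain ⟨K, w, a, b, hw, ha, hb, hq⟩ := h
  refine ⟨K, w, b, a, hw, hb, ha, fun n hn => ?_⟩
  rw [← Nat.choose_symm hn, ← hq (N - n) (Nat.sub_le N n), Nat.sub_sub_self hn]
  exact Finset.sum_congr rfl fun k _ => by ring

end IsConicPowerSum

lemma isConicPowerSum_single_zero (N : ℕ) : IsConicPowerSum N (Pi.single 0 1) := by
  refine ⟨1, 1, 1, 0, fun _ => zero_le_one, fun _ => zero_le_one, fun _ => le_rfl,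
    fun n _ => ?_⟩
  rcases n with _ | n <;> simp

lemma convex_setOf_isConicPowerSum (N : ℕ) (f g : ℕ → ℝ) :
    Convex ℝ {s : ℝ | IsConicPowerSum N (f + s • g)} := by
  intro s hs t ht c d hc hd hcd
  show IsConicPowerSum N (f + (c • s + d • t) • g)
  convert (IsConicPowerSum.smul hs hc).add (IsConicPowerSum.smul ht hd) using 1
  ext n
  simp only [Pi.add_apply, Pi.smul_apply, smul_eq_mul]
  linear_combination -f n * hcd

/-- The roots `0 ≤ r₁ < r₂` of `r² = s r - t` give `m n = w₁ r₁ⁿ + w₂ r₂ⁿ`, and the hypothesis on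
`m 1` says exactly that `w₁ w₂ ≥ 0`. -/
lemma isConicPowerSum_of_recurrence {N : ℕ} {m : ℕ → ℝ} {s t : ℝ} (hs : 0 ≤ s) (ht : 0 ≤ t)
    (hdisc : 4 * t < s ^ 2) (hrec : ∀ n, n + 2 ≤ N → m (n + 2) = s * m (n + 1) - t * m n)
    (hm0 : 0 ≤ m 0) (hm1 : m 1 ^ 2 + t * m 0 ^ 2 ≤ s * m 0 * m 1) :
    IsConicPowerSum N (fun n => N.choose n * m n) := by
  obtain ⟨r₁, r₂, hr₁, hlt, hsum, hprod⟩ :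
      ∃ r₁ r₂ : ℝ, 0 ≤ r₁ ∧ r₁ < r₂ ∧ r₁ + r₂ = s ∧ r₁ * r₂ = t := by
    have hd2 : √(s ^ 2 - 4 * t) ^ 2 = s ^ 2 - 4 * t := Real.sq_sqrt (by linarith)
    have hd : 0 < √(s ^ 2 - 4 * t) := Real.sqrt_pos.2 (by linarith)
    exact ⟨(s - √(s ^ 2 - 4 * t)) / 2, (s + √(s ^ 2 - 4 * t)) / 2, by nlinarith, by linarith,
      by ring, by linear_combination -hd2 / 4⟩
  have hr₂₁ : r₂ - r₁ ≠ 0 := sub_ne_zero.2 hlt.ne'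
  subst hsum hprod
  have hw : 0 ≤ r₂ * m 0 - m 1 ∧ 0 ≤ m 1 - r₁ * m 0 := by
    have huv : 0 ≤ (r₂ * m 0 - m 1) * (m 1 - r₁ * m 0) := by linarith
    have hsum : 0 ≤ (r₂ * m 0 - m 1) + (m 1 - r₁ * m 0) := by nlinarith
    rcases mul_nonneg_iff.1 huv with h | ⟨h₁, h₂⟩
    · exact h
    · exact ⟨by linarith, by linarith⟩
  have hclosed : ∀ n ≤ N, m n =
      (r₂ * m 0 - m 1) / (r₂ - r₁) * r₁ ^ n + (m 1 - r₁ * m 0) / (r₂ - r₁) * r₂ ^ n := by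
    intro n
    induction n using Nat.twoStepInduction with
    | zero => intro; field_simp; ring
    | one => intro; field_simp; ring
    | more n ih₀ ih₁ =>
      intro hn
      rw [hrec n hn, ih₀ (by omega), ih₁ (by omega)]
      ring
  refine ⟨2, ![(r₂ * m 0 - m 1) / (r₂ - r₁), (m 1 - r₁ * m 0) / (r₂ - r₁)], ![1, 1], ![r₁, r₂],
    Fin.forall_fin_two.2 ⟨?_, ?_⟩, Fin.forall_fin_two.2 ⟨zero_le_one, zero_le_one⟩,
    Fin.forall_fin_two.2 ⟨hr₁, hr₁.trans hlt.le⟩, fun n hn => ?_⟩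
  · exact div_nonneg hw.1 (by linarith)
  · exact div_nonneg hw.2 (by linarith)
  · have hC : (N.choose n : ℝ) ≠ 0 := Nat.cast_ne_zero.2 (Nat.choose_pos hn).ne'
    simp [hclosed n hn, hC]

lemma IsConicPowerSum.reverse_single {N j : ℕ} {α : ℝ} (hj : j ≤ N)
    (h : IsConicPowerSum N (1 + α • Pi.single j 1)) :
    IsConicPowerSum N (1 + α • Pi.single (N - j) 1) :=
  h.reverse.congr fun n hn => by
    simp only [Pi.add_apply, Pi.one_apply, Pi.smul_apply, Pi.single_apply,
      show N - n = j ↔ n = N - j by omega]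

lemma sqrt_six_bounds : 2.449 < √6 ∧ √6 < 2.4495 :=
  ⟨(Real.lt_sqrt (by norm_num)).2 (by norm_num), (Real.sqrt_lt' (by norm_num)).2 (by norm_num)⟩

lemma sqrt_twentyOne_bounds : 4.5825 < √21 ∧ √21 < 4.5826 :=
  ⟨(Real.lt_sqrt (by norm_num)).2 (by norm_num), (Real.sqrt_lt' (by norm_num)).2 (by norm_num)⟩

lemma isConicPowerSum_four_single_zero {α : ℝ} (hα : -(5 / 12) ≤ α) :
    IsConicPowerSum 4 (1 + α • Pi.single 0 1) := by
  have hbase : IsConicPowerSum 4 (1 + (-(5 / 12) : ℝ) • Pi.single 0 1) := by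
    refine ⟨4, ![8/33, 1/3, 1/132, 35/96], ![1, 1, 1, 0], ![1/4, 1/2, 3, 1],
      fun k => by fin_cases k <;> norm_num, fun k => by fin_cases k <;> norm_num,
      fun k => by fin_cases k <;> norm_num, fun n hn => ?_⟩
    interval_cases n <;> simp [Fin.sum_univ_four, Nat.choose] <;> norm_num
  convert hbase.add ((isConicPowerSum_single_zero 4).smul (neg_le_iff_add_nonneg.1 hα)) using 1
  ext n
  simp only [Pi.add_apply, Pi.smul_apply, smul_eq_mul]
  ring

lemma isConicPowerSum_four_lower_one :
    IsConicPowerSum 4 (1 + ((3 * √6 - 8) / 2) • Pi.single 1 1) := by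
  obtain ⟨h₁, h₂⟩ := sqrt_six_bounds
  refine ⟨5, ![161/24 - 39/16 * √6, -176/21 + 24/7 * √6, 8/3 - √6, 1/168 + 1/112 * √6,
      37/48 - 3/32 * √6], ![1, 1, 1, 1, 0], ![0, 1/4, 1/2, 2, 1],
    fun k => by fin_cases k <;> simp <;> linarith, fun k => by fin_cases k <;> norm_num,
    fun k => by fin_cases k <;> norm_num, fun n hn => ?_⟩
  interval_cases n <;> simp [Fin.sum_univ_five, Nat.choose] <;> ring

lemma isConicPowerSum_four_upper_two :
    IsConicPowerSum 4 (1 + (5 * (√21 - 3) / 18) • Pi.single 2 1) := by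
  obtain ⟨h₁, h₂⟩ := sqrt_twentyOne_bounds
  refine ⟨5, ![-95/108 + 55/162 * √21, 64/27 - 40/81 * √21, -85/108 + 35/162 * √21,
      8/27 - 5/81 * √21, 5/18 + 85/864 * √21], ![1, 1, 1, 1, 0], ![0, 1/4, 1, 3/2, 1],
    fun k => by fin_cases k <;> simp <;> linarith, fun k => by fin_cases k <;> norm_num,
    fun k => by fin_cases k <;> norm_num, fun n hn => ?_⟩
  interval_cases n <;> simp [Fin.sum_univ_five, Nat.choose] <;> ring

lemma isConicPowerSum_four_upper_one :
    IsConicPowerSum 4 (1 + (5 * (√21 - 3) / 18) • Pi.single 1 1) := by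
  obtain ⟨h₁, h₂⟩ := sqrt_twentyOne_bounds
  have h21 : √21 ^ 2 = 21 := Real.sq_sqrt (by norm_num)
  refine (isConicPowerSum_of_recurrence (N := 4)
    (m := fun n => (1 + (5 * (√21 - 3) / 18) • Pi.single 1 1 : ℕ → ℝ) n / Nat.choose 4 n)
    (s := (21 + √21) / 5) (t := (3 + 3 * √21) / 10) (by positivity) (by positivity)
    (by nlinarith) (fun n hn => ?_) (by norm_num) ?_).congr fun n hn =>
      mul_div_cancel₀ _ (Nat.cast_ne_zero.2 (Nat.choose_pos hn).ne')
  · obtain _ | _ | _ := (by omega : n = 0 ∨ n = 1 ∨ n = 2) <;> subst n <;>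
      simp [Nat.choose] <;> linarith
  · simp [Nat.choose]
    nlinarith

lemma isConicPowerSum_four_lower_two :
    IsConicPowerSum 4 (1 + ((3 * √6 - 8) / 2) • Pi.single 2 1) := by
  obtain ⟨h₁, h₂⟩ := sqrt_six_bounds
  have h6 : √6 ^ 2 = 6 := Real.sq_sqrt (by norm_num)
  refine (isConicPowerSum_of_recurrence (N := 4)
    (m := fun n => (1 + ((3 * √6 - 8) / 2) • Pi.single 2 1 : ℕ → ℝ) n / Nat.choose 4 n)
    (s := 2 + √6) (t := 1) (by positivity) zero_le_one
    (by nlinarith) (fun n hn => ?_) (by norm_num) ?_).congr fun n hn =>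
      mul_div_cancel₀ _ (Nat.cast_ne_zero.2 (Nat.choose_pos hn).ne')
  · obtain _ | _ | _ := (by omega : n = 0 ∨ n = 1 ∨ n = 2) <;> subst n <;>
      simp [Nat.choose] <;> linarith
  · simp [Nat.choose]
    nlinarith

lemma isConicPowerSum_four_one_add_smul_single {α : ℝ} (hlo : (3 * √6 - 8) / 2 ≤ α)
    (hhi : α ≤ 5 * (√21 - 3) / 18) {j : ℕ} (hj : j ≤ 4) :
    IsConicPowerSum 4 (1 + α • Pi.single j 1) := by
  have hseg : ∀ j, IsConicPowerSum 4 (1 + ((3 * √6 - 8) / 2) • Pi.single j 1) →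
      IsConicPowerSum 4 (1 + (5 * (√21 - 3) / 18) • Pi.single j 1) →
      IsConicPowerSum 4 (1 + α • Pi.single j 1) := fun j hL hU =>
    (convex_iff_ordConnected.1 (convex_setOf_isConicPowerSum 4 1 (Pi.single j 1))).out hL hU
      ⟨hlo, hhi⟩
  have h₀ : IsConicPowerSum 4 (1 + α • Pi.single 0 1) :=
    isConicPowerSum_four_single_zero (by linarith [sqrt_six_bounds.1])
  interval_cases j
  · exact h₀
  · exact hseg 1 isConicPowerSum_four_lower_one isConicPowerSum_four_upper_one
  · exact hseg 2 isConicPowerSum_four_lower_two isConicPowerSum_four_upper_two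
  · exact hseg 3 (isConicPowerSum_four_lower_one.reverse_single (by norm_num))
      (isConicPowerSum_four_upper_one.reverse_single (by norm_num))
  · exact h₀.reverse_single (by norm_num)

lemma isConicPowerSum_four_one_add_smul {p : ℕ → ℝ} (hp : ∀ k ≤ 4, 0 ≤ p k)
    (hsum : ∑ k ∈ Finset.range 5, p k = 1) {α : ℝ} (hlo : (3 * √6 - 8) / 2 ≤ α)
    (hhi : α ≤ 5 * (√21 - 3) / 18) : IsConicPowerSum 4 (1 + α • p) := by
  have hterm : ∀ j ∈ Finset.range 5, IsConicPowerSum 4 (p j • (1 + α • Pi.single j 1)) :=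
    fun j hj => have hj4 : j ≤ 4 := Nat.lt_succ_iff.1 (Finset.mem_range.1 hj)
      (isConicPowerSum_four_one_add_smul_single hlo hhi hj4).smul (hp j hj4)
  refine (IsConicPowerSum.sum (Finset.range 5) hterm).congr fun n hn => ?_
  have hn5 : n ∈ Finset.range 5 := Finset.mem_range.2 (by omega)
  simp only [Finset.sum_apply, Pi.smul_apply, Pi.add_apply, Pi.one_apply, smul_eq_mul, mul_add,
    mul_one, Finset.sum_add_distrib, hsum, Pi.single_apply, mul_ite, mul_zero, Finset.sum_ite_eq,
    hn5, if_true]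
  ring

lemma symProj_add_smul_rhoDS (N : ℕ) (p : ℕ → ℝ) (α : ℝ) :
    symProj N + (α : ℂ) • rhoDS N p = rhoDS N (1 + α • p) := by
  ext x y
  simp only [Matrix.add_apply, Matrix.smul_apply, symProj, rhoDS, smul_eq_mul, Finset.mul_sum,
    ← Finset.sum_add_distrib, Pi.add_apply, Pi.one_apply, Pi.smul_apply]
  refine Finset.sum_congr rfl fun k _ => ?_
  push_cast
  ring

/-- For four-qubit diagonal symmetric states, `𝟙_S + α ρ_DS` is fully separable
for `(3√6 - 8)/2 ≤ α ≤ 5(√21 - 3)/18`. -/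
theorem stmt10 (p : ℕ → ℝ) (hp : ∀ k ≤ 4, 0 ≤ p k)
    (hsum : ∑ k ∈ Finset.range 5, p k = 1)
    (α : ℝ) (hα1 : (3 * Real.sqrt 6 - 8) / 2 ≤ α)
    (hα2 : α ≤ 5 * (Real.sqrt 21 - 3) / 18) :
    FullySep (symProj 4 + (α : ℂ) • rhoDS 4 p) := by
  rw [symProj_add_smul_rhoDS]
  exact (isConicPowerSum_four_one_add_smul hp hsum hα1 hα2).fullySep_rhoDS
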